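/- The map Ψ₂ preserves the function (x,y) ↦ H(y,x): for every (x,y) ∈ ℝ², writing Ψ₂(x,y) = (x̄, ȳ), one has H(ȳ, x̄) = H(y, x). Consequently each curve {(x,y) : H(y,x) = κ} (κ > 0) is an invariant curve of Ψ₂. -/

import Mathlib

/-- The ultradiscrete QRT map `Ψ₂(x,y) = (x̄, ȳ)` with `x̄ = -x + max(y, 0)` and
`ȳ = -y + |x̄|`. -/
noncomputable def psi2 (p : ℝ × ℝ) : ℝ × ℝ :=
  (-p.1 + max p.2 0, -p.2 + |(-p.1 + max p.2 0)|)

/-- `H(x,y) = max(x, -y, -x+y, -x-y)`. -/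
noncomputable def H (x y : ℝ) : ℝ :=
  max x (max (-y) (max (-x + y) (-x - y)))

/-!
`Ψ₂` is the composition of the reflection `x ↦ max(y,0) - x` in the first coordinate and the
reflection `y ↦ |x| - y` in the second. Grouping the four terms of `H(y,x)` suitably, each
reflection merely exchanges two of them:
`H(y,x) = max(y, x - y, -x - min(y,0)) = max(-x, y, |x| - y)`.
-/

theorem H_eq_max_sub_min (x y : ℝ) : H y x = max y (max (x - y) (-x - min y 0)) := by
  rw [H, ← max_sub_sub_left, sub_zero, neg_add_eq_sub, neg_sub_comm]
  ac_rfl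

theorem H_eq_max_abs_sub (x y : ℝ) : H y x = max (-x) (max y (|x| - y)) := by
  rw [H, abs_eq_max_neg, ← max_sub_sub_right, neg_add_eq_sub, neg_sub_comm, max_left_comm]

theorem H_neg_add_max (x y : ℝ) : H y (-x + max y 0) = H y x := by
  have hsum : max y 0 + min y 0 = y + 0 := max_add_min y 0
  have h₁ : -x + max y 0 - y = -x - min y 0 := by linarith
  have h₂ : -(-x + max y 0) - min y 0 = x - y := by linarith
  rw [H_eq_max_sub_min, H_eq_max_sub_min, h₁, h₂, max_comm (-x - _)]

theorem H_neg_add_abs (x y : ℝ) : H (-y + |x|) x = H y x := by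
  rw [H_eq_max_abs_sub, H_eq_max_abs_sub, neg_add_eq_sub, sub_sub_cancel, max_comm y]

theorem psi2_preserves_H_swapped :
    (∀ p : ℝ × ℝ, H (psi2 p).2 (psi2 p).1 = H p.2 p.1) ∧
    ∀ κ : ℝ, 0 < κ → ∀ p : ℝ × ℝ, H p.2 p.1 = κ → H (psi2 p).2 (psi2 p).1 = κ := by
  have preserves (p : ℝ × ℝ) : H (psi2 p).2 (psi2 p).1 = H p.2 p.1 :=
    (H_neg_add_abs _ _).trans (H_neg_add_max _ _)
  exact ⟨preserves, fun κ _ p hp => (preserves p).trans hp⟩
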